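/- arXiv:2206.08216 — 5 statements merged into one kernel-verified Lean document; each statement's English description precedes it below -/
import Mathlib

section
/- Let λ > 0, ν > 0 and let f(x; λ, ν) = λ ν exp(−λx) (1 − exp(−λx))^(ν−1) be the GE density. For every t with 0 ≤ t < λ, the moment generating function satisfies ∫₀^∞ exp(t x) f(x; λ, ν) dx = Γ(ν + 1) Γ(1 − t/λ) / Γ(ν − t/λ + 1). -/
/-!
Substituting `u = 1 - exp (-λ x)`, which maps `(0, ∞)` onto `(0, 1)` with
`du = λ exp (-λ x) dx`, and writing `exp (t x) = (1 - u) ^ (-t/λ)`, turns the moment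
generating function into
`ν B(ν, 1 - t/λ) = ν Γ(ν) Γ(1 - t/λ) / Γ(ν + 1 - t/λ)`.
-/

open Real Set MeasureTheory

/-- The generalized exponential (GE) density with rate `l > 0` and shape `v > 0`. -/
noncomputable def geDensity (l v x : ℝ) : ℝ :=
  l * v * Real.exp (-(l * x)) * (1 - Real.exp (-(l * x))) ^ (v - 1)

theorem integral_rpow_mul_one_sub_rpow {a b : ℝ} (ha : 0 < a) (hb : 0 < b) :
    ∫ x in (0 : ℝ)..1, x ^ (a - 1) * (1 - x) ^ (b - 1) = Gamma a * Gamma b / Gamma (a + b) := by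
  have hbeta := Complex.betaIntegral_eq_Gamma_mul_div a b (by simpa) (by simpa)
  rw [← Complex.ofReal_add, Complex.Gamma_ofReal, Complex.Gamma_ofReal, Complex.Gamma_ofReal,
    Complex.betaIntegral] at hbeta
  refine Complex.ofReal_injective ?_
  rw [← intervalIntegral.integral_ofReal]
  push_cast
  rw [← hbeta]
  refine intervalIntegral.integral_congr fun x hx => ?_
  rw [uIcc_of_le zero_le_one] at hx
  push_cast [Complex.ofReal_cpow hx.1, Complex.ofReal_cpow (sub_nonneg.mpr hx.2)]
  ring

theorem strictMono_one_sub_exp_neg_mul {l : ℝ} (hl : 0 < l) :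
    StrictMono fun x => 1 - exp (-(l * x)) := by
  intro x y hxy
  dsimp only
  gcongr

theorem image_one_sub_exp_neg_mul_Ioi {l : ℝ} (hl : 0 < l) :
    (fun x => 1 - exp (-(l * x))) '' Ioi 0 = Ioo 0 1 := by
  ext u
  constructor
  · rintro ⟨x, hx, rfl⟩
    have : exp (-(l * x)) < 1 := exp_lt_one_iff.mpr (by nlinarith [mem_Ioi.mp hx])
    exact ⟨by linarith, by linarith [exp_pos (-(l * x))]⟩
  · rintro ⟨hu0, hu1⟩
    have hlog : log (1 - u) < 0 := log_neg (by linarith) (by linarith)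
    refine ⟨-log (1 - u) / l, div_pos (neg_pos.mpr hlog) hl, ?_⟩
    dsimp only
    rw [mul_div_cancel₀ _ hl.ne', neg_neg, exp_log (by linarith)]
    ring

theorem integral_Ioi_mul_exp_neg_comp_one_sub_exp_neg {l : ℝ} (hl : 0 < l) (g : ℝ → ℝ) :
    ∫ x in Ioi 0, l * exp (-(l * x)) * g (1 - exp (-(l * x))) = ∫ u in Ioo 0 1, g u := by
  have hderiv : ∀ x ∈ Ioi (0 : ℝ),
      HasDerivWithinAt (fun x => 1 - exp (-(l * x))) (l * exp (-(l * x))) (Ioi 0) x := by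
    intro x _
    have := (((hasDerivAt_id x).const_mul l).neg.exp.const_sub 1).hasDerivWithinAt (s := Ioi 0)
    simpa [mul_comm] using this
  rw [← image_one_sub_exp_neg_mul_Ioi hl, integral_image_eq_integral_abs_deriv_smul
    measurableSet_Ioi hderiv (strictMono_one_sub_exp_neg_mul hl).injective.injOn]
  refine setIntegral_congr_fun measurableSet_Ioi fun x _ => ?_
  rw [abs_of_pos (mul_pos hl (exp_pos _)), smul_eq_mul]

-- The right-hand side is `l * exp (-(l * x)) * g (1 - exp (-(l * x)))`, the shape of the
-- substitution `u = 1 - exp (-(l * x))`.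
theorem exp_mul_geDensity {l : ℝ} (hl : l ≠ 0) (v t x : ℝ) :
    exp (t * x) * geDensity l v x = l * exp (-(l * x)) *
      (v * ((1 - exp (-(l * x))) ^ (v - 1) * (1 - (1 - exp (-(l * x)))) ^ (1 - t / l - 1))) := by
  have hexp : exp (-(l * x)) ^ (1 - t / l - 1) = exp (t * x) := by
    rw [← exp_mul]
    congr 1
    field_simp
    ring
  rw [sub_sub_cancel, hexp, geDensity]
  ring

theorem ge_mgf_general (l v t : ℝ) (hl : 0 < l) (hv : 0 < v) (ht : t < l) :
    ∫ x in Ioi (0 : ℝ), Real.exp (t * x) * geDensity l v x =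
      Real.Gamma (v + 1) * Real.Gamma (1 - t / l) / Real.Gamma (v - t / l + 1) := by
  have hb : 0 < 1 - t / l := sub_pos.mpr ((div_lt_one hl).mpr ht)
  simp_rw [exp_mul_geDensity hl.ne']
  rw [integral_Ioi_mul_exp_neg_comp_one_sub_exp_neg hl
    (fun u => v * (u ^ (v - 1) * (1 - u) ^ (1 - t / l - 1))),
    ← integral_Ioc_eq_integral_Ioo, ← intervalIntegral.integral_of_le zero_le_one,
    intervalIntegral.integral_const_mul, integral_rpow_mul_one_sub_rpow hv hb,
    Gamma_add_one hv.ne', show v + (1 - t / l) = v - t / l + 1 by ring]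
  ring

/-- The moment generating function of the GE distribution:
for `0 ≤ t < λ`, `∫₀^∞ exp(t x) f(x; λ, ν) dx = Γ(ν+1) Γ(1 − t/λ) / Γ(ν − t/λ + 1)`. -/
theorem ge_mgf (l v t : ℝ) (hl : 0 < l) (hv : 0 < v) (ht0 : 0 ≤ t) (ht : t < l) :
    ∫ x in Ioi (0 : ℝ), Real.exp (t * x) * geDensity l v x =
      Real.Gamma (v + 1) * Real.Gamma (1 - t / l) / Real.Gamma (v - t / l + 1) :=
  ge_mgf_general l v t hl hv ht
end

section
/- Let λ > 0 and ν > 1, and let f(x; λ, ν) be the GE density. Then f(·; λ, ν) tends to 0 as x → 0⁺, is strictly increasing on the interval (0, log(ν)/λ], and is strictly decreasing on the interval [log(ν)/λ, ∞); in particular the density attains its unique mode at x = log(ν)/λ. -/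
/-!
Under the substitution `t = exp (-λ x)`, which decreases from `1` to `0` on `(0, ∞)`, the density
becomes `λ ν t (1 - t) ^ (ν - 1)`, whose `t`-derivative `λ ν (1 - t) ^ (ν - 2) (1 - ν t)` changes
sign exactly at `t = 1 / ν`, i.e. at `x = log ν / λ`.
-/

open Real Set Filter

noncomputable def geProfile (v t : ℝ) : ℝ := t * (1 - t) ^ (v - 1)

lemma geDensity_eq_mul_geProfile (l v x : ℝ) :
    geDensity l v x = l * v * geProfile v (exp (-(l * x))) := by
  rw [geDensity, geProfile]
  ring

lemma hasDerivAt_geProfile (v : ℝ) {t : ℝ} (ht : t < 1) :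
    HasDerivAt (geProfile v) ((1 - t) ^ (v - 2) * (1 - v * t)) t := by
  have hpos : 0 < 1 - t := by linarith
  have hpow : HasDerivAt (fun s => (1 - s) ^ (v - 1)) (-1 * (v - 1) * (1 - t) ^ (v - 1 - 1)) t :=
    ((hasDerivAt_id t).const_sub 1).rpow_const (Or.inl hpos.ne')
  have hderiv : (1 - t) ^ (v - 2) * (1 - v * t)
      = 1 * (1 - t) ^ (v - 1) + t * (-1 * (v - 1) * (1 - t) ^ (v - 1 - 1)) := by
    rw [show v - 1 = v - 2 + 1 by ring, rpow_add_one hpos.ne', show v - 2 + 1 - 1 = v - 2 by ring]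
    ring
  rw [hderiv]
  exact (hasDerivAt_id' t).mul hpow

lemma geProfile_strictMonoOn {v : ℝ} (hv : 1 < v) : StrictMonoOn (geProfile v) (Icc 0 v⁻¹) := by
  have hv₀ : 0 < v := by linarith
  have hinv : v⁻¹ < 1 := inv_lt_one_of_one_lt₀ hv
  refine strictMonoOn_of_deriv_pos (convex_Icc _ _) ?_ ?_
  · exact fun t ht ↦ (hasDerivAt_geProfile v (ht.2.trans_lt hinv)).continuousAt.continuousWithinAt
  · intro t ht
    rw [interior_Icc] at ht
    rw [(hasDerivAt_geProfile v (ht.2.trans hinv)).deriv]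
    have hvt : v * t < 1 := by
      simpa [mul_inv_cancel₀ hv₀.ne'] using mul_lt_mul_of_pos_left ht.2 hv₀
    have : 0 < (1 - t) ^ (v - 2) := rpow_pos_of_pos (by linarith [ht.2.trans hinv]) _
    exact mul_pos this (by linarith)

lemma geProfile_strictAntiOn {v : ℝ} (hv : 0 < v) : StrictAntiOn (geProfile v) (Ico v⁻¹ 1) := by
  refine strictAntiOn_of_deriv_neg (convex_Ico _ _) ?_ ?_
  · exact fun t ht ↦ (hasDerivAt_geProfile v ht.2).continuousAt.continuousWithinAt
  · intro t ht
    rw [interior_Ico] at ht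
    rw [(hasDerivAt_geProfile v ht.2).deriv]
    have hvt : 1 < v * t := (inv_lt_iff_one_lt_mul₀' hv).mp ht.1
    have : 0 < (1 - t) ^ (v - 2) := rpow_pos_of_pos (by linarith [ht.2]) _
    exact mul_neg_of_pos_of_neg this (by linarith)

lemma strictAnti_exp_neg_mul {l : ℝ} (hl : 0 < l) : StrictAnti fun x ↦ exp (-(l * x)) :=
  fun _ _ hxy ↦ exp_lt_exp.mpr (by nlinarith)

lemma exp_neg_mul_log_div {l v : ℝ} (hl : l ≠ 0) (hv : 0 < v) :
    exp (-(l * (log v / l))) = v⁻¹ := by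
  rw [mul_div_cancel₀ _ hl, exp_neg, exp_log hv]

lemma geDensity_strictMonoOn {l v : ℝ} (hl : 0 < l) (hv : 0 < v) :
    StrictMonoOn (geDensity l v) (Ioc 0 (log v / l)) := by
  have hmaps : MapsTo (fun x ↦ exp (-(l * x))) (Ioc 0 (log v / l)) (Ico v⁻¹ 1) := by
    intro x hx
    refine ⟨?_, ?_⟩
    · rw [← exp_neg_mul_log_div hl.ne' hv]
      exact (strictAnti_exp_neg_mul hl).antitone hx.2
    · simpa using (strictAnti_exp_neg_mul hl) hx.1
  have h := (geProfile_strictAntiOn hv).comp ((strictAnti_exp_neg_mul hl).strictAntiOn _) hmaps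
  rw [funext (geDensity_eq_mul_geProfile l v)]
  exact (strictMono_mul_left_of_pos (mul_pos hl hv)).comp_strictMonoOn h

lemma geDensity_strictAntiOn {l v : ℝ} (hl : 0 < l) (hv : 1 < v) :
    StrictAntiOn (geDensity l v) (Ici (log v / l)) := by
  have hmaps : MapsTo (fun x ↦ exp (-(l * x))) (Ici (log v / l)) (Icc 0 v⁻¹) := by
    intro x hx
    refine ⟨(exp_pos _).le, ?_⟩
    rw [← exp_neg_mul_log_div hl.ne' (by linarith)]
    exact (strictAnti_exp_neg_mul hl).antitone hx
  have h := (geProfile_strictMonoOn hv).comp_strictAntiOn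
    ((strictAnti_exp_neg_mul hl).strictAntiOn _) hmaps
  rw [funext (geDensity_eq_mul_geProfile l v)]
  exact (strictMono_mul_left_of_pos (mul_pos hl (by linarith))).comp_strictAntiOn h

lemma continuous_geDensity (l : ℝ) {v : ℝ} (hv : 1 ≤ v) : Continuous (geDensity l v) := by
  unfold geDensity
  fun_prop (disch := linarith)

lemma geDensity_zero (l : ℝ) {v : ℝ} (hv : v ≠ 1) : geDensity l v 0 = 0 := by
  simp [geDensity, zero_rpow (sub_ne_zero.mpr hv)]

/-- For `ν > 1`, the GE density tends to `0` as `x → 0⁺`, is strictly increasing on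
`(0, log ν / λ]`, strictly decreasing on `[log ν / λ, ∞)`, and in particular attains its
unique mode at `x = log ν / λ`. -/
theorem ge_density_mode (l v : ℝ) (hl : 0 < l) (hv : 1 < v) :
    Tendsto (geDensity l v) (nhdsWithin 0 (Ioi 0)) (nhds 0) ∧
    StrictMonoOn (geDensity l v) (Ioc 0 (Real.log v / l)) ∧
    StrictAntiOn (geDensity l v) (Ici (Real.log v / l)) ∧
    ∀ x ∈ Ioi (0 : ℝ), x ≠ Real.log v / l →
      geDensity l v x < geDensity l v (Real.log v / l) := by
  have hmono := geDensity_strictMonoOn hl (zero_lt_one.trans hv)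
  have hanti := geDensity_strictAntiOn hl hv
  have hzero := (continuous_geDensity l hv.le).tendsto' 0 0 (geDensity_zero l hv.ne')
  refine ⟨hzero.mono_left nhdsWithin_le_nhds, hmono, hanti, ?_⟩
  intro x hx hne
  rcases hne.lt_or_gt with hlt | hgt
  · exact hmono ⟨hx, hlt.le⟩ ⟨div_pos (log_pos hv) hl, le_rfl⟩ hlt
  · exact hanti self_mem_Ici hgt.le hgt
end

section
/- Let α ≥ 0, λ > 0, and ν > α/(1 + α), and let f(x; λ, ν) be the GE density. Then ∫₀^∞ f(x; λ, ν)^(1+α) dx = λ^α ν^(1+α) B(1 + α, (1 + α)(ν − 1) + 1), where B(a, b) = Γ(a)Γ(b)/Γ(a + b) is the Beta function. -/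
/-!
Substituting `t = exp (-λ x)`, so that `dt = -λ t dx`, turns `f(x; λ, ν)^(1+α) dx` into
`λ^α ν^(1+α) t^α (1 - t)^((1+α)(ν-1)) dt` on `(0, 1)`, which is a Beta integral;
the hypothesis `ν > α/(1+α)` is exactly the positivity of its second parameter
`(1+α)(ν-1) + 1`.
-/

open Real Set

/-- The real Beta function `B(a, b) = Γ(a)Γ(b)/Γ(a+b)`. -/
noncomputable def realBeta (a b : ℝ) : ℝ :=
  Real.Gamma a * Real.Gamma b / Real.Gamma (a + b)

open MeasureTheory

theorem realBeta_eq_integral {s t : ℝ} (hs : 0 < s) (ht : 0 < t) :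
    realBeta s t = ∫ x in Ioo (0 : ℝ) 1, x ^ (s - 1) * (1 - x) ^ (t - 1) := by
  have hbeta : Complex.betaIntegral s t =
      ((∫ x in (0 : ℝ)..1, x ^ (s - 1) * (1 - x) ^ (t - 1) : ℝ) : ℂ) := by
    rw [← intervalIntegral.integral_ofReal, Complex.betaIntegral]
    refine intervalIntegral.integral_congr fun x hx => ?_
    rw [uIcc_of_le zero_le_one] at hx
    push_cast
    rw [Complex.ofReal_cpow hx.1, Complex.ofReal_cpow (sub_nonneg.2 hx.2)]
    push_cast
    rfl
  rw [show realBeta s t = ProbabilityTheory.beta s t from rfl,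
    ProbabilityTheory.beta_eq_betaIntegralReal s t hs ht, hbeta, Complex.ofReal_re,
    intervalIntegral.integral_of_le zero_le_one, integral_Ioc_eq_integral_Ioo]

theorem image_exp_neg_mul_Ioi {l : ℝ} (hl : 0 < l) :
    (fun x => exp (-(l * x))) '' Ioi 0 = Ioo 0 1 := by
  have : (fun x => exp (-(l * x))) = exp ∘ (fun y => -y) ∘ (l * ·) := rfl
  rw [this, image_comp, image_comp, image_mul_left_Ioi hl, mul_zero, image_neg_Ioi, neg_zero,
    image_exp_Iio, exp_zero]

theorem setIntegral_Ioi_comp_exp_neg_mul {E : Type*} [NormedAddCommGroup E] [NormedSpace ℝ E]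
    {l : ℝ} (hl : 0 < l) (g : ℝ → E) :
    ∫ x in Ioi 0, (l * exp (-(l * x))) • g (exp (-(l * x))) = ∫ t in Ioo 0 1, g t := by
  rw [← image_exp_neg_mul_Ioi hl,
    integral_image_eq_integral_abs_deriv_smul measurableSet_Ioi
      (f' := fun x => -l * exp (-(l * x)))]
  · refine setIntegral_congr_fun measurableSet_Ioi fun x _ => ?_
    rw [abs_mul, abs_neg, abs_of_pos hl, abs_of_pos (exp_pos _)]
  · exact fun x _ =>
      (((hasDerivAt_id x).const_mul l).neg.exp.congr_deriv (by simp; ring)).hasDerivWithinAt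
  · exact fun x _ y _ hxy => mul_left_cancel₀ hl.ne' (neg_injective (exp_injective hxy))

theorem geDensity_rpow {l v x : ℝ} (hl : 0 < l) (hv : 0 ≤ v) (hx : 0 ≤ x) (p : ℝ) :
    geDensity l v x ^ p = (l * exp (-(l * x))) * (l ^ (p - 1) * v ^ p *
      (exp (-(l * x)) ^ (p - 1) * (1 - exp (-(l * x))) ^ (p * (v - 1)))) := by
  set t := exp (-(l * x))
  have ht : 0 < t := exp_pos _
  have ht1 : 0 ≤ 1 - t := sub_nonneg.2 (exp_le_one_iff.2 (by nlinarith))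
  rw [geDensity, mul_rpow (by positivity) (rpow_nonneg ht1 _), mul_rpow (by positivity) ht.le,
    mul_rpow hl.le hv, ← rpow_mul ht1, mul_comm (v - 1) p, rpow_sub_one hl.ne',
    rpow_sub_one ht.ne']
  field_simp

/-- For `α ≥ 0`, `λ > 0` and `ν > α/(1+α)`,
`∫₀^∞ f(x; λ, ν)^(1+α) dx = λ^α ν^(1+α) B(1+α, (1+α)(ν−1)+1)`. -/
theorem ge_density_power_integral (a l v : ℝ) (ha : 0 ≤ a) (hl : 0 < l)
    (hv : a / (1 + a) < v) :
    ∫ x in Ioi (0 : ℝ), geDensity l v x ^ (1 + a) =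
      l ^ a * v ^ (1 + a) * realBeta (1 + a) ((1 + a) * (v - 1) + 1) := by
  have ha1 : 0 < 1 + a := by linarith
  have hv0 : 0 < v := (div_nonneg ha ha1.le).trans_lt hv
  have hB : 0 < (1 + a) * (v - 1) + 1 := by nlinarith [(div_lt_iff₀ ha1).mp hv]
  let g (t : ℝ) := l ^ a * v ^ (1 + a) * (t ^ a * (1 - t) ^ ((1 + a) * (v - 1)))
  calc ∫ x in Ioi (0 : ℝ), geDensity l v x ^ (1 + a)
      = ∫ x in Ioi (0 : ℝ), (l * exp (-(l * x))) • g (exp (-(l * x))) :=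
        setIntegral_congr_fun measurableSet_Ioi fun x hx => by
          rw [geDensity_rpow hl hv0.le (le_of_lt hx), add_sub_cancel_left, smul_eq_mul]
    _ = ∫ t in Ioo (0 : ℝ) 1, g t := setIntegral_Ioi_comp_exp_neg_mul hl g
    _ = l ^ a * v ^ (1 + a) * realBeta (1 + a) ((1 + a) * (v - 1) + 1) := by
        rw [integral_const_mul, realBeta_eq_integral ha1 hB, add_sub_cancel_left,
          add_sub_cancel_right]
end

section
/- Let α ≥ 0 and ν > 1. For λ > 0, let ξ_α(λ, ν) be the 2-vector with components ξ_α(λ, ν)_i = ∫₀^∞ u_i(x) f(x; λ, ν)^(1+α) dx, where u_1 = u_λ and u_2 = u_ν are the GE score functions. Then for every λ > 0: ξ_α(λ, ν)_1 = λ^(α−1) ξ_α(1, ν)_1 and ξ_α(λ, ν)_2 = λ^α ξ_α(1, ν)_2. -/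
open Real Set

/-- The GE score vector `u(x) = (u_λ(x), u_ν(x))ᵀ`. -/
noncomputable def geScore (l v x : ℝ) : Fin 2 → ℝ :=
  ![1 / l - x + (v - 1) * x * Real.exp (-(l * x)) / (1 - Real.exp (-(l * x))),
    1 / v + Real.log (1 - Real.exp (-(l * x)))]

/-- `J_β(λ, ν) = ∫₀^∞ u(x) u(x)ᵀ f(x; λ, ν)^(1+β) dx`. -/
noncomputable def geJ (b l v : ℝ) : Matrix (Fin 2) (Fin 2) ℝ :=
  Matrix.of fun i j =>
    ∫ x in Ioi (0 : ℝ), geScore l v x i * geScore l v x j * geDensity l v x ^ (1 + b)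

/-- `ξ_α(λ, ν) = ∫₀^∞ u(x) f(x; λ, ν)^(1+α) dx`. -/
noncomputable def geXi (a l v : ℝ) : Fin 2 → ℝ := fun i =>
  ∫ x in Ioi (0 : ℝ), geScore l v x i * geDensity l v x ^ (1 + a)

/-- `K_α(λ, ν) = J_{2α}(λ, ν) − ξ_α(λ, ν) ξ_α(λ, ν)ᵀ`. -/
noncomputable def geK (a l v : ℝ) : Matrix (Fin 2) (Fin 2) ℝ :=
  geJ (2 * a) l v - Matrix.of fun i j => geXi a l v i * geXi a l v j

/-- The asymptotic covariance matrix `Σ_α(λ, ν) = J_α⁻¹ K_α J_α⁻¹` of the rescaled MDPDE. -/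
noncomputable def geSigma (a l v : ℝ) : Matrix (Fin 2) (Fin 2) ℝ :=
  (geJ a l v)⁻¹ * geK a l v * (geJ a l v)⁻¹

/-!
λ is a pure rate parameter: `f(x; λ, ν) = λ f(λx; 1, ν)`, `u_λ(x; λ, ν) = λ⁻¹ u_λ(λx; 1, ν)` and
`u_ν(x; λ, ν) = u_ν(λx; 1, ν)`. Substituting `y = λx` in `ξ_α(λ, ν)` then contributes the
Jacobian `λ⁻¹`, and collecting the powers of `λ` gives the exponents `α − 1` and `α`.
-/

open MeasureTheory

theorem integral_Ioi_zero_eq_of_eq_smul_comp_mul {E : Type*} [NormedAddCommGroup E]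
    [NormedSpace ℝ E] {f g : ℝ → E} {c l : ℝ} (hl : 0 < l)
    (h : ∀ x ∈ Ioi (0 : ℝ), f x = c • g (l * x)) :
    ∫ x in Ioi (0 : ℝ), f x = (c * l⁻¹) • ∫ x in Ioi (0 : ℝ), g x := by
  rw [setIntegral_congr_fun measurableSet_Ioi h, integral_smul,
    integral_comp_mul_left_Ioi g 0 hl, mul_zero, smul_smul]

theorem geDensity_eq_mul_geDensity_one (l v x : ℝ) :
    geDensity l v x = l * geDensity 1 v (l * x) := by
  simp only [geDensity, one_mul]
  ring

theorem geDensity_nonneg {l v x : ℝ} (hl : 0 ≤ l) (hv : 0 ≤ v) (hx : 0 ≤ x) :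
    0 ≤ geDensity l v x := by
  have hbase : 0 ≤ 1 - exp (-(l * x)) :=
    sub_nonneg.mpr (exp_le_one_iff.mpr (neg_nonpos.mpr (mul_nonneg hl hx)))
  unfold geDensity
  have := rpow_nonneg hbase (v - 1)
  positivity

theorem geDensity_rpow_eq {l v x : ℝ} (hl : 0 < l) (hv : 0 ≤ v) (hx : 0 ≤ x) (p : ℝ) :
    geDensity l v x ^ p = l ^ p * geDensity 1 v (l * x) ^ p := by
  rw [geDensity_eq_mul_geDensity_one,
    mul_rpow hl.le (geDensity_nonneg zero_le_one hv (mul_nonneg hl.le hx))]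

theorem geScore_zero_eq {l : ℝ} (hl : l ≠ 0) (v x : ℝ) :
    geScore l v x 0 = l⁻¹ * geScore 1 v (l * x) 0 := by
  simp only [geScore, Matrix.cons_val_zero, one_mul]
  field_simp

theorem geScore_one_eq (l v x : ℝ) : geScore l v x 1 = geScore 1 v (l * x) 1 := by
  simp only [geScore, Matrix.cons_val_one, one_mul]

theorem geXi_zero_eq {l v : ℝ} (hl : 0 < l) (hv : 0 ≤ v) (a : ℝ) :
    geXi a l v 0 = l ^ (a - 1) * geXi a 1 v 0 := by
  have hpow : l ^ a * l⁻¹ = l ^ (a - 1) := (rpow_sub_one hl.ne' a).symm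
  rw [geXi, integral_Ioi_zero_eq_of_eq_smul_comp_mul (c := l ^ a) hl, hpow, smul_eq_mul, geXi]
  intro x hx
  rw [geScore_zero_eq hl.ne', geDensity_rpow_eq hl hv (le_of_lt hx), rpow_add hl, rpow_one,
    smul_eq_mul]
  field_simp

theorem geXi_one_eq {l v : ℝ} (hl : 0 < l) (hv : 0 ≤ v) (a : ℝ) :
    geXi a l v 1 = l ^ a * geXi a 1 v 1 := by
  have hpow : l ^ (1 + a) * l⁻¹ = l ^ a := by
    rw [rpow_add hl, rpow_one, mul_comm, inv_mul_cancel_left₀ hl.ne']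
  rw [geXi, integral_Ioi_zero_eq_of_eq_smul_comp_mul (c := l ^ (1 + a)) hl, hpow, smul_eq_mul,
    geXi]
  intro x hx
  rw [geScore_one_eq, geDensity_rpow_eq hl hv (le_of_lt hx), smul_eq_mul]
  ring

theorem geXi_scaling_general (a v : ℝ) (hv : 1 < v) :
    ∀ l : ℝ, 0 < l →
      geXi a l v 0 = l ^ (a - 1) * geXi a 1 v 0 ∧
      geXi a l v 1 = l ^ a * geXi a 1 v 1 :=
  fun _ hl => ⟨geXi_zero_eq hl (by linarith) a, geXi_one_eq hl (by linarith) a⟩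

/-- Scaling of the components of `ξ_α(λ, ν)` in the rate parameter `λ`. -/
theorem geXi_scaling (a v : ℝ) (ha : 0 ≤ a) (hv : 1 < v) :
    ∀ l : ℝ, 0 < l →
      geXi a l v 0 = l ^ (a - 1) * geXi a 1 v 0 ∧
      geXi a l v 1 = l ^ a * geXi a 1 v 1 :=
  geXi_scaling_general a v hv
end

section
/- Let f > 0 and g > 0 be real numbers. Then the density power divergence integrand converges as the tuning parameter α → 0⁺: lim_{α→0⁺} [ f^(1+α) − (1 + 1/α) f^α g + (1/α) g^(1+α) ] = f − g + g (log g − log f); in particular, for densities f and g (which integrate to one) the density power divergence d_α(g, f) reduces in the limit α → 0 to the Kullback–Leibler divergence ∫ g (log g − log f). -/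
open Real Set Filter

open scoped Topology

/-! Rewrite the integrand as `f^(1+α) − f^α g + g · (g^α − f^α)/α`. The first two terms tend to
`f − g` by continuity, and the difference quotient is a slope of `α ↦ g^α − f^α` at `0`, whose
derivative there is `log g − log f`. -/

theorem tendsto_rpow_sub_rpow_div_nhdsNE {x y : ℝ} (hx : 0 < x) (hy : 0 < y) :
    Tendsto (fun a : ℝ => (y ^ a - x ^ a) / a) (𝓝[≠] 0) (𝓝 (log y - log x)) := by
  have hderiv : HasDerivAt (fun a : ℝ => y ^ a - x ^ a) (log y - log x) 0 := by
    have h := (hasStrictDerivAt_const_rpow hy 0).hasDerivAt.sub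
      (hasStrictDerivAt_const_rpow hx 0).hasDerivAt
    rwa [rpow_zero, rpow_zero, one_mul, one_mul] at h
  refine hderiv.tendsto_slope_zero.congr fun a => ?_
  simp [div_eq_inv_mul]

theorem dpd_integrand_eq (f : ℝ) {g a : ℝ} (hg : 0 < g) (ha : a ≠ 0) :
    f ^ (1 + a) - (1 + 1 / a) * f ^ a * g + (1 / a) * g ^ (1 + a) =
      f ^ (1 + a) - f ^ a * g + g * ((g ^ a - f ^ a) / a) := by
  rw [rpow_add hg, rpow_one]
  field_simp
  ring

/-- The density power divergence integrand converges, as the tuning parameter `α → 0⁺`,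
to the Kullback–Leibler integrand: for `f > 0` and `g > 0`,
`lim_{α→0⁺} [ f^(1+α) − (1 + 1/α) f^α g + (1/α) g^(1+α) ] = f − g + g (log g − log f)`. -/
theorem dpd_integrand_tendsto_kl (f g : ℝ) (hf : 0 < f) (hg : 0 < g) :
    Tendsto
      (fun a : ℝ => f ^ (1 + a) - (1 + 1 / a) * f ^ a * g + (1 / a) * g ^ (1 + a))
      (nhdsWithin 0 (Ioi 0))
      (nhds (f - g + g * (Real.log g - Real.log f))) := by
  have hpow : Continuous fun a : ℝ => f ^ a := continuous_const_rpow hf.ne'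
  have hfirst : Tendsto (fun a : ℝ => f ^ (1 + a)) (𝓝[>] 0) (𝓝 f) :=
    ((hpow.comp (continuous_const_add 1)).tendsto' 0 f (by simp)).mono_left nhdsWithin_le_nhds
  have hsecond : Tendsto (fun a : ℝ => f ^ a * g) (𝓝[>] 0) (𝓝 g) :=
    ((hpow.mul continuous_const).tendsto' 0 g (by simp)).mono_left nhdsWithin_le_nhds
  have hslope := (tendsto_rpow_sub_rpow_div_nhdsNE hf hg).mono_left (nhdsGT_le_nhdsNE 0)
  refine ((hfirst.sub hsecond).add (hslope.const_mul g)).congr' ?_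
  filter_upwards [self_mem_nhdsWithin] with a (ha : 0 < a)
  exact (dpd_integrand_eq f hg ha.ne').symm
end
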